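/- For any fixed φ ∈ ℝ, the identity W(P⃗)^† W'(P⃗) = e^{iφ} C_{m:0} (C'_{m:0})^† holds for all P⃗ ∈ 𝒫^m if and only if both of the following hold: C'_{m:0} = e^{iφ} C_{m:0}, and W(P⃗) = W'(P⃗) for all P⃗ ∈ 𝒫^m. -/

import Mathlib

open Matrix Complex

noncomputable section

namespace QEC

/-- The space of `n`-qubit operators: `2^n × 2^n` complex matrices, with the
index set realized as `Fin n → Fin 2`. -/
abbrev QMat (n : ℕ) := Matrix (Fin n → Fin 2) (Fin n → Fin 2) ℂ

/-- The Pauli `X` matrix. -/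
def PX : Matrix (Fin 2) (Fin 2) ℂ := !![0, 1; 1, 0]

/-- The Pauli `Y` matrix. -/
def PY : Matrix (Fin 2) (Fin 2) ℂ := !![0, -Complex.I; Complex.I, 0]

/-- The Pauli `Z` matrix. -/
def PZ : Matrix (Fin 2) (Fin 2) ℂ := !![1, 0; 0, -1]

/-- The four single-qubit Pauli matrices `𝒫 = {I, X, Y, Z}`, indexed by `Fin 4`. -/
def pauli : Fin 4 → Matrix (Fin 2) (Fin 2) ℂ := ![1, PX, PY, PZ]

/-- `A^{(k)} = I^{⊗(k-1)} ⊗ A ⊗ I^{⊗(n-k)}`: the single-qubit operator `A`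
acting on the `k`-th qubit of an `n`-qubit system. -/
def embed {n : ℕ} (k : Fin n) (A : Matrix (Fin 2) (Fin 2) ℂ) : QMat n :=
  fun x y => A (x k) (y k) * ∏ q ∈ Finset.univ.erase k, (if x q = y q then (1 : ℂ) else 0)

/-- The Kronecker product `P 0 ⊗ P 1 ⊗ ⋯ ⊗ P (n-1)` of `n` single-qubit operators. -/
def kron {n : ℕ} (P : Fin n → Matrix (Fin 2) (Fin 2) ℂ) : QMat n :=
  fun x y => ∏ q, P q (x q) (y q)

/-- The circuit `F(A⃗) = C_m A_m^{(k_m)} C_{m-1} ⋯ C_1 A_1^{(k_1)} C_0`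
(here the layers are indexed by `Fin m`, with `i : Fin m` standing for layer `i+1`). -/
def circuit {n m : ℕ} (C : Fin (m + 1) → QMat n) (k : Fin m → Fin n)
    (A : Fin m → Matrix (Fin 2) (Fin 2) ℂ) : QMat n :=
  ((List.ofFn fun i : Fin m => C i.succ * embed (k i) (A i)).reverse).prod * C 0

/-- The cumulative product `C_{m:i} = C_m C_{m-1} ⋯ C_i`. -/
def Ccum {n m : ℕ} (C : Fin (m + 1) → QMat n) (i : Fin (m + 1)) : QMat n :=
  (((List.ofFn C).reverse).take (m + 1 - (i : ℕ))).prod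

/-- `V_i(P) = C_{m:i} P^{(k_i)} C_{m:i}^†` (with `i : Fin m` standing for layer `i+1`). -/
def Vop {n m : ℕ} (C : Fin (m + 1) → QMat n) (k : Fin m → Fin n) (i : Fin m)
    (P : Matrix (Fin 2) (Fin 2) ℂ) : QMat n :=
  Ccum C i.succ * embed (k i) P * (Ccum C i.succ)ᴴ

/-- `W(P⃗) = V_m(P_m) V_{m-1}(P_{m-1}) ⋯ V_1(P_1)`. -/
def Wop {n m : ℕ} (C : Fin (m + 1) → QMat n) (k : Fin m → Fin n)
    (P : Fin m → Matrix (Fin 2) (Fin 2) ℂ) : QMat n :=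
  ((List.ofFn fun i : Fin m => Vop C k i (P i)).reverse).prod

/-- The global phase `e^{iφ}`. -/
def phase (φ : ℝ) : ℂ := Complex.exp ((φ : ℂ) * Complex.I)

/-- A unitary `C` is Clifford when it maps every Pauli string to a signed Pauli
string under conjugation. -/
def IsClifford {n : ℕ} (C : QMat n) : Prop :=
  ∀ Q : Fin n → Fin 4, ∃ (ε : ℂ) (Q' : Fin n → Fin 4), (ε = 1 ∨ ε = -1) ∧
    C * kron (fun q => pauli (Q q)) * Cᴴ = ε • kron (fun q => pauli (Q' q))

/-!
For the all-identity Pauli string every `V_i(I) = C_{m:i} C_{m:i}^†` is `1`, so `W = W' = 1` there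
and the hypothesis at that string reads `e^{iφ} C_{m:0} C'_{m:0}^† = 1`, i.e.
`C'_{m:0} = e^{iφ} C_{m:0}`. The right-hand side is therefore `1` for every string, and for a
unitary `W(P⃗)` the equation `W(P⃗)^† W'(P⃗) = 1` says exactly `W'(P⃗) = W(P⃗)`.
-/

section Unitary

variable {R : Type*} [Monoid R] [StarMul R]

theorem star_mul_eq_one_iff_of_mem_unitary {a b : R} (ha : a ∈ unitary R) :
    star a * b = 1 ↔ b = a := by
  refine ⟨fun h => ?_, fun h => by rw [h]; exact Unitary.star_mul_self_of_mem ha⟩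
  calc b = a * star a * b := by rw [Unitary.mul_star_self_of_mem ha, one_mul]
    _ = a := by rw [mul_assoc, h, mul_one]

theorem mul_star_eq_one_iff_of_mem_unitary {a b : R} (hb : b ∈ unitary R) :
    a * star b = 1 ↔ a = b := by
  refine ⟨fun h => ?_, fun h => by rw [h]; exact Unitary.mul_star_self_of_mem hb⟩
  calc a = a * (star b * b) := by rw [Unitary.star_mul_self_of_mem hb, mul_one]
    _ = b := by rw [← mul_assoc, h, one_mul]

theorem forall_star_mul_eq_iff_of_mem_unitary {ι : Type*} {W W' : ι → R}
    (hW : ∀ i, W i ∈ unitary R) {i₀ : ι} (hW₀ : W i₀ = 1) (hW'₀ : W' i₀ = 1) {x : R} :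
    (∀ i, star (W i) * W' i = x) ↔ x = 1 ∧ ∀ i, W i = W' i := by
  constructor
  · intro h
    have hx : x = 1 := by simpa only [hW₀, hW'₀, star_one, one_mul] using (h i₀).symm
    exact ⟨hx, fun i => ((star_mul_eq_one_iff_of_mem_unitary (hW i)).1 (hx ▸ h i)).symm⟩
  · rintro ⟨rfl, hWW'⟩ i
    rw [← hWW' i]
    exact Unitary.star_mul_self_of_mem (hW i)

end Unitary

theorem kron_one {n : ℕ} : kron (1 : Fin n → Matrix (Fin 2) (Fin 2) ℂ) = 1 := by
  ext x y
  simp only [kron, Pi.one_apply, Matrix.one_apply]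
  by_cases h : x = y
  · subst h; simp
  · rw [if_neg h]
    obtain ⟨q, hq⟩ := Function.ne_iff.mp h
    exact Finset.prod_eq_zero (Finset.mem_univ q) (by simp [hq])

theorem kron_mul {n : ℕ} (P Q : Fin n → Matrix (Fin 2) (Fin 2) ℂ) :
    kron (P * Q) = kron P * kron Q := by
  ext x y
  simp only [kron, Pi.mul_apply, Matrix.mul_apply]
  rw [Fintype.prod_sum (fun q (a : Fin 2) => P q (x q) a * Q q a (y q))]
  simp [Finset.prod_mul_distrib]

theorem kron_star {n : ℕ} (P : Fin n → Matrix (Fin 2) (Fin 2) ℂ) :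
    kron (star P) = star (kron P) := by
  ext x y
  simp [kron]

theorem embed_eq_kron {n : ℕ} (k : Fin n) (A : Matrix (Fin 2) (Fin 2) ℂ) :
    embed k A = kron (Pi.mulSingle k A) := by
  ext x y
  simp only [embed, kron]
  rw [← Finset.mul_prod_erase _ _ (Finset.mem_univ k), Pi.mulSingle_eq_same]
  refine congrArg _ (Finset.prod_congr rfl fun q hq => ?_)
  rw [Pi.mulSingle_eq_of_ne (Finset.ne_of_mem_erase hq), Matrix.one_apply]

def embedHom {n : ℕ} (k : Fin n) : Matrix (Fin 2) (Fin 2) ℂ →⋆* QMat n where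
  toFun := embed k
  map_one' := by rw [embed_eq_kron, Pi.mulSingle_one, kron_one]
  map_mul' A B := by rw [embed_eq_kron, Pi.mulSingle_mul, kron_mul, embed_eq_kron, embed_eq_kron]
  map_star' A := by rw [embed_eq_kron, ← Pi.star_mulSingle, kron_star, embed_eq_kron]

theorem embed_one {n : ℕ} (k : Fin n) : embed k (1 : Matrix (Fin 2) (Fin 2) ℂ) = 1 :=
  map_one (embedHom k)

theorem embed_mem_unitaryGroup {n : ℕ} (k : Fin n) {A : Matrix (Fin 2) (Fin 2) ℂ}
    (hA : A ∈ unitaryGroup (Fin 2) ℂ) : embed k A ∈ unitaryGroup (Fin n → Fin 2) ℂ :=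
  Unitary.map_mem (embedHom k) hA

theorem pauli_zero : pauli 0 = 1 := rfl

theorem pauli_mem_unitaryGroup (j : Fin 4) : pauli j ∈ unitaryGroup (Fin 2) ℂ := by
  rw [mem_unitaryGroup_iff]
  fin_cases j <;>
    · ext a b
      fin_cases a <;> fin_cases b <;>
        simp [pauli, PX, PY, PZ, Matrix.mul_apply, Fin.sum_univ_two, Matrix.one_apply,
          star_eq_conjTranspose, conjTranspose_apply]

section Circuit

variable {n m : ℕ} {C : Fin (m + 1) → QMat n} (hC : ∀ i, C i ∈ unitaryGroup (Fin n → Fin 2) ℂ)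
include hC

theorem Ccum_mem_unitaryGroup (i : Fin (m + 1)) :
    Ccum C i ∈ unitaryGroup (Fin n → Fin 2) ℂ := by
  refine Submonoid.list_prod_mem _ fun A hA => ?_
  obtain ⟨j, rfl⟩ := List.mem_ofFn.mp (List.mem_reverse.mp (List.mem_of_mem_take hA))
  exact hC j

theorem Vop_mem_unitaryGroup (k : Fin m → Fin n) (i : Fin m) {P : Matrix (Fin 2) (Fin 2) ℂ}
    (hP : P ∈ unitaryGroup (Fin 2) ℂ) : Vop C k i P ∈ unitaryGroup (Fin n → Fin 2) ℂ :=
  have hCi := Ccum_mem_unitaryGroup hC i.succ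
  mul_mem (mul_mem hCi (embed_mem_unitaryGroup _ hP)) (Unitary.star_mem hCi)

theorem Vop_one (k : Fin m → Fin n) (i : Fin m) : Vop C k i 1 = 1 := by
  rw [Vop, embed_one, mul_one]
  exact Unitary.mul_star_self_of_mem (Ccum_mem_unitaryGroup hC i.succ)

theorem Wop_mem_unitaryGroup (k : Fin m → Fin n) {P : Fin m → Matrix (Fin 2) (Fin 2) ℂ}
    (hP : ∀ i, P i ∈ unitaryGroup (Fin 2) ℂ) : Wop C k P ∈ unitaryGroup (Fin n → Fin 2) ℂ := by
  refine Submonoid.list_prod_mem _ fun A hA => ?_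
  obtain ⟨i, rfl⟩ := List.mem_ofFn.mp (List.mem_reverse.mp hA)
  exact Vop_mem_unitaryGroup hC k i (hP i)

theorem Wop_one (k : Fin m → Fin n) : Wop C k (fun _ => 1) = 1 := by
  refine List.prod_eq_one fun A hA => ?_
  obtain ⟨i, rfl⟩ := List.mem_ofFn.mp (List.mem_reverse.mp hA)
  exact Vop_one hC k i

end Circuit

theorem stmt5_general (n m : ℕ)
    (C C' : Fin (m + 1) → QMat n)
    (hC : ∀ i, C i ∈ Matrix.unitaryGroup (Fin n → Fin 2) ℂ)
    (hC' : ∀ i, C' i ∈ Matrix.unitaryGroup (Fin n → Fin 2) ℂ)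
    (k l : Fin m → Fin n) (φ : ℝ) :
    (∀ p : Fin m → Fin 4,
        (Wop C k (fun i => pauli (p i)))ᴴ * Wop C' l (fun i => pauli (p i)) =
          phase φ • (Ccum C 0 * (Ccum C' 0)ᴴ)) ↔
    (Ccum C' 0 = phase φ • Ccum C 0 ∧
      ∀ p : Fin m → Fin 4,
        Wop C k (fun i => pauli (p i)) = Wop C' l (fun i => pauli (p i))) := by
  have hW : ∀ p : Fin m → Fin 4, Wop C k (fun i => pauli (p i)) ∈ unitary (QMat n) :=
    fun p => Wop_mem_unitaryGroup hC k fun i => pauli_mem_unitaryGroup (p i)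
  have hW₀ : Wop C k (fun _ => pauli 0) = 1 := by rw [pauli_zero]; exact Wop_one hC k
  have hW'₀ : Wop C' l (fun _ => pauli 0) = 1 := by rw [pauli_zero]; exact Wop_one hC' l
  simp only [← star_eq_conjTranspose]
  rw [forall_star_mul_eq_iff_of_mem_unitary hW hW₀ hW'₀,
    ← smul_mul_assoc, mul_star_eq_one_iff_of_mem_unitary (Ccum_mem_unitaryGroup hC' 0), eq_comm]

/-- For a fixed phase `φ`, `W(P⃗)^† W'(P⃗) = e^{iφ} C_{m:0} (C'_{m:0})^†` for all
`P⃗ ∈ 𝒫^m` iff both `C'_{m:0} = e^{iφ} C_{m:0}` and `W(P⃗) = W'(P⃗)` for all `P⃗ ∈ 𝒫^m`. -/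
theorem stmt5 (n m : ℕ) (hn : 1 ≤ n) (hm : 1 ≤ m)
    (C C' : Fin (m + 1) → QMat n)
    (hC : ∀ i, C i ∈ Matrix.unitaryGroup (Fin n → Fin 2) ℂ)
    (hC' : ∀ i, C' i ∈ Matrix.unitaryGroup (Fin n → Fin 2) ℂ)
    (k l : Fin m → Fin n) (φ : ℝ) :
    (∀ p : Fin m → Fin 4,
        (Wop C k (fun i => pauli (p i)))ᴴ * Wop C' l (fun i => pauli (p i)) =
          phase φ • (Ccum C 0 * (Ccum C' 0)ᴴ)) ↔
    (Ccum C' 0 = phase φ • Ccum C 0 ∧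
      ∀ p : Fin m → Fin 4,
        Wop C k (fun i => pauli (p i)) = Wop C' l (fun i => pauli (p i))) :=
  stmt5_general n m C C' hC hC' k l φ

end QEC
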